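/- Let a > 1. There exists exactly one holomorphic function ξ₁ defined on ℂ ∖ ([−z₁,−z₂] ∪ [z₂,z₁]) such that ξ₁(z)³ − z·ξ₁(z)² − (a²−1)·ξ₁(z) + z·a² = 0 for every z in the domain and ξ₁(z) − z → 0 as z → ∞. -/

import Mathlib

/-!
The cubic reads `(ξ² - a²)(z - ξ) = ξ`, i.e. `z = F(ξ)` with `F(w) = w + w / (w² - a²)`.
On the open set `G = {w | ‖w‖² + a² < ‖w² - a²‖²}` the map `F` is injective and `F' ≠ 0`, and every
`z ∈ Ω₁` has a preimage in `G`: for non-real `z` the roots sum to `z`, so one root `ξ` has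
`Im ξ · Im z > 0`, and the imaginary part of `(ξ² - a²)(z - ξ) = ξ` puts it in `G`; for real `z` the
intermediate value theorem gives a real root with `|ξ| > q` or `|ξ| < p`, since `F(p) = z₂` and
`F(q) = z₁`. So `ξ₁ = (F|_G)⁻¹` is holomorphic on `Ω₁` by the inverse function theorem, and
`ξ₁(z) - z = -ξ₁ / (ξ₁² - a²) → 0`. Any other branch with `ξ(z) - z → 0` takes values in `G` near
`∞`, hence agrees with `ξ₁` there, and on the connected set `Ω₁` by the identity theorem.
-/

open MeasureTheory Filter Topology Polynomial Asymptotics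

noncomputable section

/-- `√(1+8a²)` -/
def s8 (a : ℝ) : ℝ := Real.sqrt (1 + 8 * a ^ 2)

/-- the critical point `p` -/
def pBr (a : ℝ) : ℝ := Real.sqrt (1 / 2 + a ^ 2 - s8 a / 2)

/-- the critical point `q` -/
def qBr (a : ℝ) : ℝ := Real.sqrt (1 / 2 + a ^ 2 + s8 a / 2)

/-- the right edge point `z₁` -/
def z1 (a : ℝ) : ℝ := qBr a * (s8 a + 3) / (s8 a + 1)

/-- the left edge point `z₂` of the right interval -/
def z2 (a : ℝ) : ℝ := pBr a * (s8 a - 3) / (s8 a - 1)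

open scoped Classical in
/-- the Pastur density: `(1/π)|Im ξ|` for a non-real root `ξ` of the Pastur cubic, `0` else. -/
def pasturRho (a x : ℝ) : ℝ :=
  if h : ∃ ξ : ℂ, ξ ^ 3 - (x : ℂ) * ξ ^ 2 - ((a : ℂ) ^ 2 - 1) * ξ + (x : ℂ) * (a : ℂ) ^ 2 = 0 ∧
      ξ.im ≠ 0
  then |h.choose.im| / Real.pi
  else 0

/-- the cut `[z₂, z₁]` viewed in `ℂ` -/
def cutR (a : ℝ) : Set ℂ := {z | z.im = 0 ∧ z2 a ≤ z.re ∧ z.re ≤ z1 a}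

/-- the cut `[-z₁, -z₂]` viewed in `ℂ` -/
def cutL (a : ℝ) : Set ℂ := {z | z.im = 0 ∧ -z1 a ≤ z.re ∧ z.re ≤ -z2 a}

/-- `ℂ ∖ ([-z₁,-z₂] ∪ [z₂,z₁])` -/
def Omega1 (a : ℝ) : Set ℂ := (cutL a ∪ cutR a)ᶜ

/-- `ℂ ∖ [z₂,z₁]` -/
def Omega2 (a : ℝ) : Set ℂ := (cutR a)ᶜ

/-- `ℂ ∖ [-z₁,-z₂]` -/
def Omega3 (a : ℝ) : Set ℂ := (cutL a)ᶜ

/-- the Pastur cubic at `z`, evaluated at `ξ` -/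
def pasturCubic (a : ℝ) (z ξ : ℂ) : ℂ :=
  ξ ^ 3 - z * ξ ^ 2 - ((a : ℂ) ^ 2 - 1) * ξ + z * (a : ℂ) ^ 2

/-- `ξ` is the branch `ξ₁`: holomorphic on `Ω₁`, solves the Pastur cubic,
and `ξ₁(z) - z → 0` as `z → ∞`. -/
def IsXi1 (a : ℝ) (ξ : ℂ → ℂ) : Prop :=
  DifferentiableOn ℂ ξ (Omega1 a) ∧
  (∀ z ∈ Omega1 a, pasturCubic a z (ξ z) = 0) ∧
  Tendsto (fun z : ℂ => ξ z - z) (Bornology.cobounded ℂ) (𝓝 0)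

/-- `ξ` is the branch `ξ₂`: holomorphic on `Ω₂`, solves the Pastur cubic,
and `ξ₂(z) → a` as `z → ∞`. -/
def IsXi2 (a : ℝ) (ξ : ℂ → ℂ) : Prop :=
  DifferentiableOn ℂ ξ (Omega2 a) ∧
  (∀ z ∈ Omega2 a, pasturCubic a z (ξ z) = 0) ∧
  Tendsto ξ (Bornology.cobounded ℂ) (𝓝 (a : ℂ))

/-- `ξ` is the branch `ξ₃`: holomorphic on `Ω₃`, solves the Pastur cubic,
and `ξ₃(z) → -a` as `z → ∞`. -/
def IsXi3 (a : ℝ) (ξ : ℂ → ℂ) : Prop :=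
  DifferentiableOn ℂ ξ (Omega3 a) ∧
  (∀ z ∈ Omega3 a, pasturCubic a z (ξ z) = 0) ∧
  Tendsto ξ (Bornology.cobounded ℂ) (𝓝 (-(a : ℂ)))

open Set Bornology

section CriticalPoints

variable {a : ℝ}

lemma s8_sq (a : ℝ) : s8 a ^ 2 = 1 + 8 * a ^ 2 := by
  rw [s8, Real.sq_sqrt]; positivity

lemma three_lt_s8 (ha : 1 < a) : 3 < s8 a := by
  rw [s8, Real.lt_sqrt (by norm_num)]
  nlinarith

lemma pBr_sq (ha : 1 < a) : pBr a ^ 2 = 1 / 2 + a ^ 2 - s8 a / 2 := by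
  rw [pBr, Real.sq_sqrt]; nlinarith [s8_sq a, three_lt_s8 ha]

lemma qBr_sq (ha : 1 < a) : qBr a ^ 2 = 1 / 2 + a ^ 2 + s8 a / 2 := by
  rw [qBr, Real.sq_sqrt]; nlinarith [three_lt_s8 ha]

lemma pBr_pos (ha : 1 < a) : 0 < pBr a := by
  rw [pBr]; apply Real.sqrt_pos.2; nlinarith [s8_sq a, three_lt_s8 ha]

lemma qBr_pos (ha : 1 < a) : 0 < qBr a := by
  rw [qBr]; apply Real.sqrt_pos.2; nlinarith [three_lt_s8 ha]

lemma pBr_sq_lt (ha : 1 < a) : pBr a ^ 2 < a ^ 2 := by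
  nlinarith [pBr_sq ha, three_lt_s8 ha]

lemma lt_qBr_sq (ha : 1 < a) : a ^ 2 < qBr a ^ 2 := by
  nlinarith [qBr_sq ha, three_lt_s8 ha]

lemma z2_pos (ha : 1 < a) : 0 < z2 a := by
  have := three_lt_s8 ha
  exact div_pos (mul_pos (pBr_pos ha) (by linarith)) (by linarith)

lemma qBr_lt_z1 (ha : 1 < a) : qBr a < z1 a := by
  have := three_lt_s8 ha
  rw [z1, lt_div_iff₀ (by linarith)]
  nlinarith [qBr_pos ha]

-- `F(p) = z₂` and `F(q) = z₁` for `F(t) = t + t / (t² - a²)`, with the denominators cleared: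
-- `p` and `q` are the positive critical points of `F` on `ℝ`, `z₂` and `z₁` its critical values.
lemma z2_mul_eq (ha : 1 < a) :
    z2 a * (pBr a ^ 2 - a ^ 2) = pBr a * (pBr a ^ 2 - a ^ 2) + pBr a := by
  have := three_lt_s8 ha
  rw [z2, div_mul_eq_mul_div, div_eq_iff (by linarith)]
  linear_combination (-2 * pBr a) * pBr_sq ha

lemma z1_mul_eq (ha : 1 < a) :
    z1 a * (qBr a ^ 2 - a ^ 2) = qBr a * (qBr a ^ 2 - a ^ 2) + qBr a := by
  have := three_lt_s8 ha
  rw [z1, div_mul_eq_mul_div, div_eq_iff (by linarith)]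
  linear_combination (2 * qBr a) * qBr_sq ha

lemma sq_sub_sq_sq_sub_eq_mul (ha : 1 < a) (t : ℝ) :
    (t ^ 2 - a ^ 2) ^ 2 - (t ^ 2 + a ^ 2) = (t ^ 2 - pBr a ^ 2) * (t ^ 2 - qBr a ^ 2) := by
  rw [pBr_sq ha, qBr_sq ha]
  linear_combination (1 / 4) * s8_sq a

end CriticalPoints

def pasturMap (a : ℝ) (w : ℂ) : ℂ := w + w / (w ^ 2 - (a : ℂ) ^ 2)

def pasturG (a : ℝ) : Set ℂ := {w | ‖w‖ ^ 2 + a ^ 2 < ‖w ^ 2 - (a : ℂ) ^ 2‖ ^ 2}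

section PasturMap

variable {a : ℝ} {z w : ℂ}

lemma isOpen_pasturG (a : ℝ) : IsOpen (pasturG a) :=
  isOpen_lt (by fun_prop) (by fun_prop)

lemma sq_sub_sq_ne_zero_of_mem_pasturG (hw : w ∈ pasturG a) : w ^ 2 - (a : ℂ) ^ 2 ≠ 0 := by
  intro h
  rw [pasturG, mem_ofPred_eq, h, norm_zero] at hw
  nlinarith [norm_nonneg w]

lemma norm_mul_add_sq_le (a : ℝ) (u v : ℂ) : ‖u * v + (a : ℂ) ^ 2‖ ≤ ‖u‖ * ‖v‖ + a ^ 2 :=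
  calc ‖u * v + (a : ℂ) ^ 2‖ ≤ ‖u * v‖ + ‖(a : ℂ) ^ 2‖ := norm_add_le _ _
    _ = ‖u‖ * ‖v‖ + a ^ 2 := by
      rw [norm_mul, norm_pow, Complex.norm_real, Real.norm_eq_abs, sq_abs]

lemma pasturCubic_eq_mul (hw : w ^ 2 - (a : ℂ) ^ 2 ≠ 0) :
    pasturCubic a z w = (w ^ 2 - (a : ℂ) ^ 2) * (pasturMap a w - z) := by
  rw [pasturCubic, pasturMap]
  field_simp
  ring

lemma pasturCubic_eq_zero_iff (hw : w ^ 2 - (a : ℂ) ^ 2 ≠ 0) :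
    pasturCubic a z w = 0 ↔ pasturMap a w = z := by
  rw [pasturCubic_eq_mul hw, mul_eq_zero, or_iff_right hw, sub_eq_zero]

lemma injOn_pasturMap (a : ℝ) : InjOn (pasturMap a) (pasturG a) := by
  intro u hu v hv huv
  by_contra hne
  have hdu := sq_sub_sq_ne_zero_of_mem_pasturG hu
  have hdv := sq_sub_sq_ne_zero_of_mem_pasturG hv
  have hprod : (u ^ 2 - (a : ℂ) ^ 2) * (v ^ 2 - (a : ℂ) ^ 2) = u * v + (a : ℂ) ^ 2 := by
    rw [pasturMap, pasturMap] at huv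
    field_simp at huv
    have key : (u - v) * ((u ^ 2 - (a : ℂ) ^ 2) * (v ^ 2 - (a : ℂ) ^ 2) - (u * v + (a : ℂ) ^ 2))
        = 0 := by
      linear_combination huv
    exact sub_eq_zero.1 ((mul_eq_zero.1 key).resolve_left (sub_ne_zero.2 hne))
  have hnorm := congrArg norm hprod
  rw [norm_mul] at hnorm
  have hle := norm_mul_add_sq_le a u v
  have h1 : ‖u‖ ^ 2 + a ^ 2 < ‖u ^ 2 - (a : ℂ) ^ 2‖ ^ 2 := hu
  have h2 : ‖v‖ ^ 2 + a ^ 2 < ‖v ^ 2 - (a : ℂ) ^ 2‖ ^ 2 := hv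
  -- Cauchy–Schwarz: `(‖u‖‖v‖ + a²)² ≤ (‖u‖² + a²)(‖v‖² + a²)`
  nlinarith [sq_nonneg (‖u‖ - ‖v‖), norm_nonneg u, norm_nonneg v,
    norm_nonneg (u * v + (a : ℂ) ^ 2), mul_lt_mul'' h1 h2 (by positivity) (by positivity)]

lemma hasStrictDerivAt_pasturMap (hw : w ^ 2 - (a : ℂ) ^ 2 ≠ 0) :
    HasStrictDerivAt (pasturMap a)
      (1 - (w ^ 2 + (a : ℂ) ^ 2) / (w ^ 2 - (a : ℂ) ^ 2) ^ 2) w := by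
  have hd : HasStrictDerivAt (fun w : ℂ => w ^ 2 - (a : ℂ) ^ 2) (2 * w) w := by
    simpa using (hasStrictDerivAt_pow 2 w).fun_sub (hasStrictDerivAt_const w ((a : ℂ) ^ 2))
  refine ((hasStrictDerivAt_id w).fun_add ((hasStrictDerivAt_id w).fun_div hd hw)).congr_deriv ?_
  simp only [id]
  field_simp
  ring

lemma pasturMap_deriv_ne_zero (hw : w ∈ pasturG a) :
    1 - (w ^ 2 + (a : ℂ) ^ 2) / (w ^ 2 - (a : ℂ) ^ 2) ^ 2 ≠ 0 := by
  have hd := sq_sub_sq_ne_zero_of_mem_pasturG hw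
  intro h
  replace h : (w ^ 2 - (a : ℂ) ^ 2) ^ 2 = w * w + (a : ℂ) ^ 2 := by
    field_simp at h; linear_combination h
  have hle : ‖w ^ 2 - (a : ℂ) ^ 2‖ ^ 2 ≤ ‖w‖ ^ 2 + a ^ 2 :=
    calc ‖w ^ 2 - (a : ℂ) ^ 2‖ ^ 2 = ‖w * w + (a : ℂ) ^ 2‖ := by rw [← norm_pow, h]
      _ ≤ ‖w‖ * ‖w‖ + a ^ 2 := norm_mul_add_sq_le a w w
      _ = ‖w‖ ^ 2 + a ^ 2 := by ring
  exact hw.not_ge hle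

end PasturMap

section NonrealRoots

variable {a : ℝ} {z w : ℂ}

lemma mem_pasturG_of_im_mul_pos (hw : pasturCubic a z w = 0) (him : 0 < w.im * z.im) :
    w ∈ pasturG a := by
  set d := w ^ 2 - (a : ℂ) ^ 2 with hd_def
  have hdz : d * (z - w) = w := by rw [pasturCubic] at hw; linear_combination -hw
  have hd : d ≠ 0 := by
    rintro h
    rw [h, zero_mul] at hdz
    simp [← hdz] at him
  have him_eq : (z.im - w.im) * Complex.normSq d = -(w.im * (Complex.normSq w + a ^ 2)) := by
    have h : (Complex.normSq d : ℂ) * (z - w) = w * (starRingEnd ℂ) d := by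
      rw [Complex.normSq_eq_conj_mul_self]
      linear_combination (starRingEnd ℂ d) * hdz
    have h' := congrArg Complex.im h
    simp only [Complex.mul_im, Complex.ofReal_re, Complex.ofReal_im, zero_mul, add_zero,
      Complex.sub_im] at h'
    rw [mul_comm, h', hd_def]
    simp [Complex.mul_im, Complex.mul_re, Complex.normSq_apply, pow_two]
    ring
  have hnd : 0 < Complex.normSq d := Complex.normSq_pos.2 hd
  -- multiplied by `Im w`, `him_eq` reads `(Im w)² (|d|² - |w|² - a²) = Im w · Im z · |d|² > 0`
  show ‖w‖ ^ 2 + a ^ 2 < ‖d‖ ^ 2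
  rw [Complex.sq_norm, Complex.sq_norm]
  by_contra! hle
  nlinarith [mul_pos him hnd, mul_nonneg (sq_nonneg w.im) (sub_nonneg.2 hle),
    congrArg (w.im * ·) him_eq]

lemma exists_pasturCubic_root_im_mul_pos (a : ℝ) (hz : z.im ≠ 0) :
    ∃ w, pasturCubic a z w = 0 ∧ 0 < w.im * z.im := by
  let P : ℂ[X] := X ^ 3 - C z * X ^ 2 - C ((a : ℂ) ^ 2 - 1) * X + C (z * (a : ℂ) ^ 2)
  have hP : P.Monic := by unfold P; monicity!
  have hdeg : P.natDegree = 3 := by unfold P; compute_degree!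
  have hnext : P.nextCoeff = -z := by
    rw [nextCoeff_of_natDegree_pos (by omega), hdeg]
    simp only [P, coeff_add, coeff_sub, coeff_X_pow, coeff_C_mul, coeff_C, coeff_X]
    norm_num
  have hsum : P.roots.sum = z := by
    simpa [hnext] using ((IsAlgClosed.splits P).nextCoeff_eq_neg_sum_roots_of_monic hP).symm
  have him_sum : (P.roots.map fun r => r.im * z.im).sum = z.im * z.im := by
    rw [Multiset.sum_map_mul_right, ← hsum]
    congr 1
    exact (map_multiset_sum Complex.imAddGroupHom P.roots).symm
  by_contra! h
  have hle : (P.roots.map fun r => r.im * z.im).sum ≤ (P.roots.map fun _ => (0 : ℝ)).sum :=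
    Multiset.sum_map_le_sum_map _ _ fun r hr =>
      h r (by simpa [P, pasturCubic] using (mem_roots hP.ne_zero).1 hr)
  rw [him_sum, Multiset.map_const', Multiset.sum_replicate, smul_zero] at hle
  exact hz (mul_self_eq_zero.1 (le_antisymm hle (mul_self_nonneg _)))

end NonrealRoots

def realPasturCubic (a x t : ℝ) : ℝ := t ^ 3 - x * t ^ 2 - (a ^ 2 - 1) * t + x * a ^ 2

section RealRoots

variable {a : ℝ}

lemma pasturCubic_ofReal (a x t : ℝ) : pasturCubic a x t = (realPasturCubic a x t : ℂ) := by
  simp [pasturCubic, realPasturCubic]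

lemma continuous_realPasturCubic (a x : ℝ) : Continuous (realPasturCubic a x) := by
  unfold realPasturCubic; fun_prop

lemma realPasturCubic_eq_mul {x t c : ℝ} (h : c * (t ^ 2 - a ^ 2) = t * (t ^ 2 - a ^ 2) + t) :
    realPasturCubic a x t = (t ^ 2 - a ^ 2) * (c - x) := by
  rw [realPasturCubic]; linear_combination -h

lemma ofReal_mem_pasturG (ha : 1 < a) {t : ℝ}
    (h : 0 < (t ^ 2 - pBr a ^ 2) * (t ^ 2 - qBr a ^ 2)) : (t : ℂ) ∈ pasturG a := by
  have hd : (t : ℂ) ^ 2 - (a : ℂ) ^ 2 = ((t ^ 2 - a ^ 2 : ℝ) : ℂ) := by push_cast; ring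
  show ‖(t : ℂ)‖ ^ 2 + a ^ 2 < ‖(t : ℂ) ^ 2 - (a : ℂ) ^ 2‖ ^ 2
  rw [hd, Complex.norm_real, Complex.norm_real, Real.norm_eq_abs, Real.norm_eq_abs, sq_abs,
    sq_abs]
  linarith [sq_sub_sq_sq_sub_eq_mul ha t]

lemma realPasturCubic_qBr (ha : 1 < a) (x : ℝ) :
    realPasturCubic a x (qBr a) = (qBr a ^ 2 - a ^ 2) * (z1 a - x) :=
  realPasturCubic_eq_mul (z1_mul_eq ha)

lemma realPasturCubic_neg_qBr (ha : 1 < a) (x : ℝ) :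
    realPasturCubic a x (-qBr a) = (qBr a ^ 2 - a ^ 2) * (-z1 a - x) := by
  rw [realPasturCubic_eq_mul (c := -z1 a) (by linear_combination -z1_mul_eq ha), neg_sq]

lemma realPasturCubic_pBr (ha : 1 < a) (x : ℝ) :
    realPasturCubic a x (pBr a) = (pBr a ^ 2 - a ^ 2) * (z2 a - x) :=
  realPasturCubic_eq_mul (z2_mul_eq ha)

lemma realPasturCubic_neg_pBr (ha : 1 < a) (x : ℝ) :
    realPasturCubic a x (-pBr a) = (pBr a ^ 2 - a ^ 2) * (-z2 a - x) := by
  rw [realPasturCubic_eq_mul (c := -z2 a) (by linear_combination -z2_mul_eq ha), neg_sq]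

lemma exists_realPasturCubic_root (ha : 1 < a) {x : ℝ} (hx : (x : ℂ) ∈ Omega1 a) :
    ∃ t : ℝ, (t : ℂ) ∈ pasturG a ∧ realPasturCubic a x t = 0 := by
  have hcont {s : Set ℝ} : ContinuousOn (realPasturCubic a x) s :=
    (continuous_realPasturCubic a x).continuousOn
  have hp := pBr_pos ha
  have hq := qBr_pos ha
  have hpa := pBr_sq_lt ha
  have haq := lt_qBr_sq ha
  have hqz := qBr_lt_z1 ha
  rcases lt_or_ge (z1 a) x with hR | hR
  · obtain ⟨t, ⟨ht, -⟩, hroot⟩ := intermediate_value_Ioo (by linarith : qBr a ≤ x + 1) hcont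
      (show (0 : ℝ) ∈ Ioo _ _ from
        ⟨by rw [realPasturCubic_qBr ha]; nlinarith, by rw [realPasturCubic]; nlinarith⟩)
    exact ⟨t, ofReal_mem_pasturG ha (mul_pos (by nlinarith) (by nlinarith)), hroot⟩
  rcases lt_or_ge x (-z1 a) with hL | hL
  · obtain ⟨t, ⟨-, ht⟩, hroot⟩ := intermediate_value_Ioo (by linarith : x - 1 ≤ -qBr a) hcont
      (show (0 : ℝ) ∈ Ioo _ _ from
        ⟨by rw [realPasturCubic]; nlinarith, by rw [realPasturCubic_neg_qBr ha]; nlinarith⟩)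
    exact ⟨t, ofReal_mem_pasturG ha (mul_pos (by nlinarith) (by nlinarith)), hroot⟩
  have hx2 : x < z2 a := by
    by_contra! h
    exact hx (Or.inr ⟨by simp, by simpa using h, by simpa using hR⟩)
  have hx2' : -z2 a < x := by
    by_contra! h
    exact hx (Or.inl ⟨by simp, by simpa using hL, by simpa using h⟩)
  obtain ⟨t, ⟨ht₁, ht₂⟩, hroot⟩ := intermediate_value_Ioo' (by linarith : -pBr a ≤ pBr a) hcont
    (show (0 : ℝ) ∈ Ioo _ _ from
      ⟨by rw [realPasturCubic_pBr ha]; nlinarith, by rw [realPasturCubic_neg_pBr ha]; nlinarith⟩)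
  exact ⟨t, ofReal_mem_pasturG ha (mul_pos_of_neg_of_neg (by nlinarith) (by nlinarith)), hroot⟩

end RealRoots

lemma exists_pasturCubic_root_mem_pasturG {a : ℝ} (ha : 1 < a) {z : ℂ} (hz : z ∈ Omega1 a) :
    ∃ w ∈ pasturG a, pasturCubic a z w = 0 := by
  by_cases him : z.im = 0
  · have hzx : z = (z.re : ℂ) := Complex.ext rfl (by simp [him])
    rw [hzx] at hz ⊢
    obtain ⟨t, ht, hroot⟩ := exists_realPasturCubic_root ha hz
    exact ⟨t, ht, by rw [pasturCubic_ofReal, hroot, Complex.ofReal_zero]⟩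
  · obtain ⟨w, hw, hpos⟩ := exists_pasturCubic_root_im_mul_pos a him
    exact ⟨w, mem_pasturG_of_im_mul_pos hw hpos, hw⟩

lemma Omega1_subset_image_pasturMap {a : ℝ} (ha : 1 < a) :
    Omega1 a ⊆ pasturMap a '' pasturG a := fun z hz ↦ by
  obtain ⟨w, hw, hroot⟩ := exists_pasturCubic_root_mem_pasturG ha hz
  exact ⟨w, hw, (pasturCubic_eq_zero_iff (sq_sub_sq_ne_zero_of_mem_pasturG hw)).1 hroot⟩

section Omega1

variable {a : ℝ}

lemma cutL_eq (a : ℝ) : cutL a = Icc (-z1 a) (-z2 a) ×ℂ {0} := by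
  ext z; simp [cutL, Complex.mem_reProdIm, and_comm]

lemma cutR_eq (a : ℝ) : cutR a = Icc (z2 a) (z1 a) ×ℂ {0} := by
  ext z; simp [cutR, Complex.mem_reProdIm, and_comm]

lemma isCompact_cutL_union_cutR (a : ℝ) : IsCompact (cutL a ∪ cutR a) := by
  rw [cutL_eq, cutR_eq]
  exact (isCompact_Icc.reProdIm isCompact_singleton).union
    (isCompact_Icc.reProdIm isCompact_singleton)

lemma isOpen_Omega1 (a : ℝ) : IsOpen (Omega1 a) :=
  (isCompact_cutL_union_cutR a).isClosed.isOpen_compl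

lemma Omega1_mem_cobounded (a : ℝ) : Omega1 a ∈ cobounded ℂ :=
  isBounded_def.1 (isCompact_cutL_union_cutR a).isBounded

lemma isPreconnected_Omega1 (ha : 1 < a) : IsPreconnected (Omega1 a) := by
  set U := ({z : ℂ | 0 < z.im} ∪ Metric.ball 0 (z2 a)) ∪ {z : ℂ | z.im < 0}
  set w : ℂ := (z2 a / 2 : ℝ) * Complex.I
  have hz2 := z2_pos ha
  have hw : w ∈ Metric.ball 0 (z2 a) := by
    simp [w, abs_of_pos hz2]; linarith
  have hU : IsPreconnected U := by
    refine IsPreconnected.union (-w) (Or.inr (by simpa using hw)) (by simp [w]; linarith) ?_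
      (convex_halfSpace_im_lt 0).isPreconnected
    exact IsPreconnected.union w (by simp [w]; linarith) hw
      (convex_halfSpace_im_gt 0).isPreconnected (convex_ball _ _).isPreconnected
  have hUΩ : U ⊆ Omega1 a := by
    rintro z ((hz | hz) | hz) hcut
    · exact hz.ne' (by rcases hcut with h | h <;> exact h.1)
    · have hre := abs_lt.1 ((Complex.abs_re_le_norm z).trans_lt (mem_ball_zero_iff.1 hz))
      rcases hcut with ⟨-, -, h⟩ | ⟨-, h, -⟩ <;> linarith
    · exact hz.ne (by rcases hcut with h | h <;> exact h.1)
  have hΩU : Omega1 a ⊆ closure U := fun z _ ↦ by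
    rcases le_total 0 z.im with h | h
    · exact closure_mono (subset_union_left.trans subset_union_left)
        (by rwa [Complex.closure_setOfPred_lt_im])
    · exact closure_mono subset_union_right (by rwa [Complex.closure_setOfPred_im_lt])
  exact hU.subset_closure hUΩ hΩU

end Omega1

section Inverse

variable {𝕜 : Type*} [NontriviallyNormedField 𝕜] [CompleteSpace 𝕜]

lemma differentiableAt_of_eventually_rightInverse {f g : 𝕜 → 𝕜} {f' z : 𝕜} {s : Set 𝕜}
    (hs : IsOpen s) (hinj : InjOn f s) (hf : HasStrictDerivAt f f' (g z)) (hf' : f' ≠ 0)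
    (hg : ∀ᶠ y in 𝓝 z, g y ∈ s ∧ f (g y) = y) : DifferentiableAt 𝕜 g z := by
  obtain ⟨hgz, hfgz⟩ := hg.self_of_nhds
  set r := hf.localInverse f f' (g z) hf'
  have hr : HasStrictDerivAt r f'⁻¹ z := by
    simpa only [hfgz] using hf.to_localInverse hf'
  have hr_cont : ContinuousAt r z := by
    simpa only [hfgz] using (hf.hasStrictFDerivAt_equiv hf').localInverse_continuousAt
  have hrz : r z = g z := by
    simpa only [hfgz] using (hf.hasStrictFDerivAt_equiv hf').localInverse_apply_image
  have hfr : ∀ᶠ y in 𝓝 z, f (r y) = y := by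
    simpa only [hfgz] using hf.eventually_right_inverse hf'
  have hrs : ∀ᶠ y in 𝓝 z, r y ∈ s := hr_cont.eventually_mem (hs.mem_nhds (hrz ▸ hgz))
  refine hr.hasDerivAt.differentiableAt.congr_of_eventuallyEq ?_
  filter_upwards [hg, hfr, hrs] with y ⟨hgy, hfgy⟩ hfry hry
  exact hinj hgy hry (hfgy.trans hfry.symm)

end Inverse

section Cobounded

variable {E : Type*} [SeminormedAddCommGroup E]

lemma tendsto_cobounded_of_norm_sub_le {f : E → E} {C : ℝ}
    (h : ∀ᶠ z in cobounded E, ‖f z - z‖ ≤ C) : Tendsto f (cobounded E) (cobounded E) := by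
  rw [← tendsto_norm_atTop_iff_cobounded]
  refine tendsto_atTop_mono' _ ?_
    (tendsto_atTop_add_const_right _ (-C) tendsto_norm_cobounded_atTop)
  filter_upwards [h] with z hz
  linarith [norm_sub_norm_le z (f z), norm_sub_rev (f z) z]

lemma eventually_cobounded_eventually_nhds {p : E → Prop} (h : ∀ᶠ z in cobounded E, p z) :
    ∀ᶠ z in cobounded E, ∀ᶠ y in 𝓝 z, p y := by
  obtain ⟨r, -, hr⟩ := (Metric.hasBasis_cobounded_compl_closedBall 0).eventually_iff.1 h
  filter_upwards [(Metric.hasBasis_cobounded_compl_closedBall (0 : E)).mem_of_mem trivial]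
    with z hz
  exact eventually_of_mem (Metric.isClosed_closedBall.isOpen_compl.mem_nhds hz) hr

end Cobounded

lemma tendsto_div_sq_sub_cobounded {𝕜 : Type*} [NontriviallyNormedField 𝕜] (c : 𝕜) :
    Tendsto (fun w : 𝕜 => w / (w ^ 2 - c)) (cobounded 𝕜) (𝓝 0) := by
  have h : Tendsto (fun u : 𝕜 => u / (1 - c * u ^ 2)) (𝓝 0) (𝓝 0) := by
    have : ContinuousAt (fun u : 𝕜 => u / (1 - c * u ^ 2)) 0 := by fun_prop (disch := simp)
    simpa using this.tendsto
  refine (h.comp tendsto_inv₀_cobounded).congr' ?_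
  filter_upwards [eventually_ne_cobounded 0] with w hw
  have : 1 - c * w⁻¹ ^ 2 = (w ^ 2 - c) / w ^ 2 := by field_simp
  simp only [Function.comp, this, div_div_eq_mul_div]
  field_simp

lemma pasturG_mem_cobounded (a : ℝ) : pasturG a ∈ cobounded ℂ := by
  filter_upwards [eventually_cobounded_le_norm (a ^ 2 + 2)] with w hw
  have h := norm_sub_norm_le (w ^ 2) ((a : ℂ) ^ 2)
  rw [norm_pow, norm_pow, Complex.norm_real, Real.norm_eq_abs, sq_abs] at h
  show ‖w‖ ^ 2 + a ^ 2 < ‖w ^ 2 - (a : ℂ) ^ 2‖ ^ 2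
  have hw2 : a ^ 2 + 2 ≤ ‖w‖ ^ 2 - a ^ 2 := by nlinarith [sq_nonneg a]
  nlinarith [pow_le_pow_left₀ (by nlinarith) h 2]

def xi1 (a : ℝ) : ℂ → ℂ := Function.invFunOn (pasturMap a) (pasturG a)

section Xi1

variable {a : ℝ} {z : ℂ}

lemma xi1_mem_pasturG (ha : 1 < a) (hz : z ∈ Omega1 a) : xi1 a z ∈ pasturG a :=
  Function.invFunOn_mem (Omega1_subset_image_pasturMap ha hz)

lemma pasturMap_xi1 (ha : 1 < a) (hz : z ∈ Omega1 a) : pasturMap a (xi1 a z) = z :=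
  Function.invFunOn_eq (Omega1_subset_image_pasturMap ha hz)

lemma differentiableOn_xi1 (ha : 1 < a) : DifferentiableOn ℂ (xi1 a) (Omega1 a) := fun _ hz ↦
  have hG := xi1_mem_pasturG ha hz
  (differentiableAt_of_eventually_rightInverse (isOpen_pasturG a) (injOn_pasturMap a)
    (hasStrictDerivAt_pasturMap (sq_sub_sq_ne_zero_of_mem_pasturG hG))
    (pasturMap_deriv_ne_zero hG)
    (((isOpen_Omega1 a).eventually_mem hz).mono fun _ hy ↦
      ⟨xi1_mem_pasturG ha hy, pasturMap_xi1 ha hy⟩)).differentiableWithinAt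

lemma xi1_sub_self (ha : 1 < a) (hz : z ∈ Omega1 a) :
    xi1 a z - z = -(xi1 a z / (xi1 a z ^ 2 - (a : ℂ) ^ 2)) := by
  have h := pasturMap_xi1 ha hz
  rw [pasturMap] at h
  linear_combination h

lemma tendsto_xi1_sub_self (ha : 1 < a) :
    Tendsto (fun z ↦ xi1 a z - z) (cobounded ℂ) (𝓝 0) := by
  have hΩ := Omega1_mem_cobounded a
  -- `‖w‖ < ‖w² - a²‖` on `pasturG`, so `‖ξ₁(z) - z‖ ≤ 1`
  have hξ : Tendsto (xi1 a) (cobounded ℂ) (cobounded ℂ) := by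
    refine tendsto_cobounded_of_norm_sub_le (C := 1) ?_
    filter_upwards [hΩ] with z hz
    have hG := xi1_mem_pasturG ha hz
    have hd := norm_pos_iff.2 (sq_sub_sq_ne_zero_of_mem_pasturG hG)
    have hG' : ‖xi1 a z‖ ^ 2 + a ^ 2 < ‖xi1 a z ^ 2 - (a : ℂ) ^ 2‖ ^ 2 := hG
    rw [xi1_sub_self ha hz, norm_neg, norm_div, div_le_one hd]
    nlinarith [norm_nonneg (xi1 a z)]
  have := ((tendsto_div_sq_sub_cobounded ((a : ℂ) ^ 2)).comp hξ).neg
  rw [neg_zero] at this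
  exact this.congr' (eventually_of_mem hΩ fun z hz ↦ (xi1_sub_self ha hz).symm)

lemma isXi1_xi1 (ha : 1 < a) : IsXi1 a (xi1 a) :=
  ⟨differentiableOn_xi1 ha,
    fun _ hz ↦ (pasturCubic_eq_zero_iff (sq_sub_sq_ne_zero_of_mem_pasturG
      (xi1_mem_pasturG ha hz))).2 (pasturMap_xi1 ha hz),
    tendsto_xi1_sub_self ha⟩

end Xi1

lemma IsXi1.eventuallyEq {a : ℝ} {ξ η : ℂ → ℂ} (hξ : IsXi1 a ξ) (hη : IsXi1 a η) :
    ξ =ᶠ[cobounded ℂ] η := by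
  have hG {ζ : ℂ → ℂ} (h : IsXi1 a ζ) : ∀ᶠ z in cobounded ℂ, ζ z ∈ pasturG a := by
    refine (tendsto_cobounded_of_norm_sub_le (C := 1) ?_).eventually (pasturG_mem_cobounded a)
    exact h.2.2.eventually (Metric.closedBall_mem_nhds 0 one_pos) |>.mono fun _ hz ↦ by
      simpa using hz
  filter_upwards [hG hξ, hG hη, Omega1_mem_cobounded a] with z hξz hηz hz
  refine injOn_pasturMap a hξz hηz ?_
  rw [(pasturCubic_eq_zero_iff (sq_sub_sq_ne_zero_of_mem_pasturG hξz)).1 (hξ.2.1 z hz),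
    (pasturCubic_eq_zero_iff (sq_sub_sq_ne_zero_of_mem_pasturG hηz)).1 (hη.2.1 z hz)]

/-- For `a > 1` there is exactly one holomorphic function `ξ₁` on
`ℂ ∖ ([-z₁,-z₂] ∪ [z₂,z₁])` solving the Pastur cubic with `ξ₁(z) - z → 0` as `z → ∞`. -/
theorem statement8 (a : ℝ) (ha : 1 < a) :
    (∃ ξ : ℂ → ℂ, IsXi1 a ξ) ∧
    ∀ ξ η : ℂ → ℂ, IsXi1 a ξ → IsXi1 a η → Set.EqOn ξ η (Omega1 a) := by
  refine ⟨⟨xi1 a, isXi1_xi1 ha⟩, fun ξ η hξ hη ↦ ?_⟩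
  obtain ⟨z₀, hξη, hz₀⟩ := ((eventually_cobounded_eventually_nhds (hξ.eventuallyEq hη)).and
    (Omega1_mem_cobounded a)).exists
  exact (hξ.1.analyticOnNhd (isOpen_Omega1 a)).eqOn_of_preconnected_of_eventuallyEq
    (hη.1.analyticOnNhd (isOpen_Omega1 a)) (isPreconnected_Omega1 ha) hz₀ hξη

end
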